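/- For every n there exists a bijection ψ of the symmetric group S_n such that for all σ ∈ S_n: des(σ) = lec(ψ(σ)), and the rightmost hook in the hook factorization of ψ(σ) has the same length and the same set of entries as the special wave sw(σ) of σ. -/

import Mathlib

/-!
If `w` has a descent, its special wave `sw w = inc ++ dec` is a wave, and cutting it out leaves
`swCompl w` with `des w = des (swCompl w) + des (sw w)`; conversely `w` is recovered as
`ins (swCompl w) (sw w)`. A wave is traded for the hook on the same letters whose `inv` equals
the wave's `des`, and `ψ(w)` is defined recursively as `ψ(swCompl w)` followed by that hook.
This hook is then the last one of `ψ(w)`, which gives the statistics, and since the last hook of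
a word can be split off, `w` is recovered from `ψ(w)`: `ψ` is injective, hence bijective on
`S_n`.
-/

namespace Paper

/-- number of descents of a word -/
def des : List ℕ → ℕ
  | a :: b :: t => (if b < a then 1 else 0) + des (b :: t)
  | _ => 0

/-- number of inversions of a word -/
def inv : List ℕ → ℕ
  | [] => 0
  | a :: t => (t.countP fun x => decide (x < a)) + inv t

/-- a word is (strictly) increasing -/
def Incr (w : List ℕ) : Prop := w.Chain' (· < ·)

/-- a word is a hook: `a₁ > a₂` and `a₂ < a₃ < ⋯ < a_s`, length ≥ 2 -/
def IsHook : List ℕ → Prop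
  | a :: b :: t => b < a ∧ (b :: t).Chain' (· < ·)
  | _ => False

/-- `(γ, hs)` is the hook factorization data of `w` -/
def IsHookFact (w γ : List ℕ) (hs : List (List ℕ)) : Prop :=
  Incr γ ∧ (∀ h ∈ hs, IsHook h) ∧ w = γ ++ hs.flatten

/-- the statistic `lec` computed from the hooks of a factorization -/
def lecVal (hs : List (List ℕ)) : ℕ := (hs.map inv).sum

/-- one-line word of `σ ∈ S_n`, with entries in `[1..n]` -/
def word {n : ℕ} (σ : Equiv.Perm (Fin n)) : List ℕ :=
  List.ofFn fun i => (σ i : ℕ) + 1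

/-- a word `w₁ ⋯ w_ℓ` with maximum in position `c` is a (nontrivial) reverse wave if
`c ≠ ℓ` and `w₁ < ⋯ < w_{c-1} < w_ℓ < w_{ℓ-1} < ⋯ < w_c`. -/
def IsRevWave (w : List ℕ) : Prop :=
  ∃ c, c + 1 < w.length ∧ (w.take c ++ (w.drop c).reverse).Chain' (· < ·)

/-- a word `w₁ ⋯ w_ℓ` with maximum in position `c` is a (nontrivial) wave if
`c ≠ ℓ` and `w_ℓ < w_{ℓ-1} < ⋯ < w_{c+1} < w₁ < ⋯ < w_c`. -/
def IsWave (w : List ℕ) : Prop :=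
  ∃ c, c + 1 < w.length ∧ ((w.drop (c + 1)).reverse ++ w.take (c + 1)).Chain' (· < ·)

/-- the maximal strictly decreasing run starting below `hi` and staying above `lo` -/
def decRun (hi lo : ℕ) : List ℕ → List ℕ
  | [] => []
  | b :: t => if b < hi ∧ lo < b then b :: decRun b lo t else []

def srwAux (lo : ℕ) : List ℕ → List ℕ
  | [] => []
  | [a] => [a]
  | a :: b :: t => if a < b then a :: srwAux a (b :: t) else a :: decRun a lo (b :: t)

/-- the special reverse wave of a word: the prefix `w₁ ⋯ w_s` where `t` is the position of the
first descent (the whole word if none) and `s ≥ t` is maximal with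
`w_t > w_{t+1} > ⋯ > w_s > w_{t-1}` (convention `w₀ = 0`). -/
def srw (w : List ℕ) : List ℕ := srwAux 0 w

/-- the number of special reverse descents: `des (srw w) + χ(w_s > w_{s+1})` -/
def srdes (w : List ℕ) : ℕ :=
  des (srw w) +
    match (srw w).getLast?, (w.drop (srw w).length).head? with
    | some x, some y => if y < x then 1 else 0
    | _, _ => 0

/-- the prefix `w₁ ⋯ w_t` of `w` ending at the position `t` of the first descent
(the whole word if there is no descent) -/
def incrPrefix : List ℕ → List ℕ
  | [] => []
  | [a] => [a]
  | a :: b :: t => if a < b then a :: incrPrefix (b :: t) else [a]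

/-- the special wave `w_r ⋯ w_t ⋯ w_s` of a word -/
def sw (w : List ℕ) : List ℕ :=
  let pre := incrPrefix w
  match w.drop pre.length with
  | [] => w
  | x :: rs =>
    let kept := pre.takeWhile fun u => decide (u < x)
    pre.drop kept.length ++ x :: decRun x (kept.getLastD 0) rs

/-- the word `w \ sw(w) = w₁ ⋯ w_{r-1} w_{s+1} ⋯ w_ℓ` obtained removing the special wave -/
def swCompl (w : List ℕ) : List ℕ :=
  let pre := incrPrefix w
  match w.drop pre.length with
  | [] => []
  | x :: rs =>
    let kept := pre.takeWhile fun u => decide (u < x)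
    kept ++ rs.drop (decRun x (kept.getLastD 0) rs).length

/-- insertion `ins(a,b) = a₁ ⋯ a_x b₁ ⋯ b_q a_{x+1} ⋯ a_p`, where `x` is maximal with
`a₁ < a₂ < ⋯ < a_x < b_q` -/
def ins (a b : List ℕ) : List ℕ :=
  let pfx := (incrPrefix a).takeWhile fun u => decide (u < b.getLastD 0)
  pfx ++ b ++ a.drop pfx.length

/-- the word `ρ = ρ₁ ⋯ ρ_m` (entries in `[1..n]`) associated to an injection `Fin m ↪ Fin n` -/
def rho {n m : ℕ} (f : Fin m ↪ Fin n) : List ℕ :=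
  List.ofFn fun j => (f j : ℕ) + 1

/-- descent number of the pair `(α₀, ρ)`: `des ρ + #{a ∈ α₀ : a > ρ₁}`,
where `α₀ = [n] \ {ρ₁, …, ρ_m}` -/
def desPair (n : ℕ) {m : ℕ} (f : Fin m ↪ Fin n) : ℕ :=
  des (rho f) + ((Finset.Icc 1 n).filter fun a => a ∉ rho f ∧ (rho f).headI < a).card

/-- descent number of the pair `(α₀, ρ)`, with `ρ` given as a list -/
def desPairL (n : ℕ) (ρ : List ℕ) : ℕ :=
  des ρ + ((Finset.Icc 1 n).filter fun a => a ∉ ρ ∧ ρ.headI < a).card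

/-- the map `μ`, sending `ρ` (with complementary set `α₀ = {α₁ < ⋯ < α_{n-k-1}}`) to
`α₁ ⋯ α_{n-k-m-1} α_{n-k-1} α_{n-k-2} ⋯ α_{n-k-m} ρ₁ ⋯ ρ_{k+1}`,
where `m = #{a ∈ α₀ : a > ρ₁}` -/
def mu (n : ℕ) (ρ : List ℕ) : List ℕ :=
  let A := ((Finset.Icc 1 n).filter fun a => a ∉ ρ).sort (· ≤ ·)
  let m := (A.filter fun a => decide (ρ.headI < a)).length
  (A.take (A.length - m) ++ (A.drop (A.length - m)).reverse) ++ ρ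

open List

section ListLemmas

variable {α : Type*}

theorem drop_length_takeWhile (p : α → Bool) (l : List α) :
    l.drop (l.takeWhile p).length = l.dropWhile p := by
  calc l.drop (l.takeWhile p).length
      = (l.takeWhile p ++ l.dropWhile p).drop (l.takeWhile p).length := by
        rw [takeWhile_append_dropWhile]
    _ = l.dropWhile p := drop_left

theorem getLastD_mem {l : List α} (hl : l ≠ []) (d : α) : l.getLastD d ∈ l := by
  rw [getLastD_eq_getLast?, getLast?_eq_some_getLast hl]
  exact getLast_mem hl

theorem getLastD_congr {l : List α} (hl : l ≠ []) (a b : α) : l.getLastD a = l.getLastD b := by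
  rw [getLastD_eq_getLast?, getLastD_eq_getLast?, getLast?_eq_some_getLast hl]
  rfl

theorem getLastD_append_of_ne_nil (u : List α) {v : List α} (hv : v ≠ []) (d : α) :
    (u ++ v).getLastD d = v.getLastD d := by
  rw [getLastD_eq_getLast?, getLastD_eq_getLast?, getLast?_append_of_ne_nil u hv]

theorem le_getLastD_of_isChain [Preorder α] {l : List α} (hl : IsChain (· < ·) l) (d : α) :
    ∀ p ∈ l, p ≤ l.getLastD d := by
  intro p hp
  have hne : l ≠ [] := ne_nil_of_mem hp
  obtain ⟨l', a, rfl⟩ : ∃ l' a, l = l' ++ [a] :=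
    ⟨l.dropLast, l.getLast hne, (dropLast_append_getLast hne).symm⟩
  rw [getLastD_concat]
  rcases mem_append.1 hp with hp | hp
  · exact ((isChain_iff_pairwise.1 hl).rel_of_mem_append hp (mem_singleton_self a)).le
  · exact (mem_singleton.1 hp).le

variable [LinearOrder α]

theorem lt_of_mem_dropWhile {l : List α} (hl : IsChain (· < ·) l) {x : α} (hx : x ∉ l) :
    ∀ u ∈ l.dropWhile (fun u => decide (u < x)), x < u := by
  intro u hu
  obtain ⟨a, r, hdw⟩ := exists_cons_of_ne_nil (ne_nil_of_mem hu)
  have ha : ¬ a < x := by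
    simpa [hdw] using head_dropWhile_not (fun u => decide (u < x)) (l := l) (by simp [hdw])
  have hxa : x < a := lt_of_le_of_ne (not_lt.1 ha)
    fun h => hx (h ▸ (dropWhile_sublist _).subset (hdw ▸ mem_cons_self))
  have hchain : IsChain (· < ·) (a :: r) := hdw ▸ hl.sublist (dropWhile_sublist _)
  rw [hdw] at hu
  rcases mem_cons.1 hu with rfl | hu
  · exact hxa
  · exact hxa.trans (rel_of_pairwise_cons (isChain_iff_pairwise.1 hchain) hu)

theorem dropWhile_lt_ne_nil {l : List α} (hl : l ≠ []) {x d : α} (hx : x ≤ l.getLastD d) :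
    l.dropWhile (fun u => decide (u < x)) ≠ [] := by
  rw [Ne, dropWhile_eq_nil_iff]
  intro h
  exact hx.not_gt (by simpa using h _ (getLastD_mem hl d))

theorem insertionSort_eq_of_perm {l s : List α} (hl : l ~ s) (hs : IsChain (· < ·) s) :
    l.insertionSort (· ≤ ·) = s :=
  ((perm_insertionSort _ l).trans hl).eq_of_pairwise' (pairwise_insertionSort _ l)
    ((isChain_iff_pairwise.1 hs).imp le_of_lt)

end ListLemmas

section Descents

theorem des_cons_cons (a b : ℕ) (t : List ℕ) :
    des (a :: b :: t) = (if b < a then 1 else 0) + des (b :: t) := rfl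

theorem des_append_cons (u : List ℕ) (a : ℕ) (v : List ℕ) :
    des (u ++ a :: v) = des u + des (a :: v) + if a < u.getLastD 0 then 1 else 0 := by
  induction u with
  | nil => simp [show des [] = 0 from rfl]
  | cons b u ih =>
    cases u with
    | nil =>
      show (if a < b then 1 else 0) + des (a :: v) = 0 + des (a :: v) + if a < b then 1 else 0
      omega
    | cons c u =>
      simp only [cons_append, getLastD_cons] at ih ⊢
      rw [des_cons_cons, des_cons_cons b c u, ih]
      omega

theorem des_lt_length : ∀ {w : List ℕ}, w ≠ [] → des w < w.length
  | [a], _ => Nat.zero_lt_one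
  | a :: b :: t, _ => by
    have := des_lt_length (cons_ne_nil b t)
    rw [des_cons_cons, length_cons]
    split <;> omega

theorem des_eq_zero_of_isChain : ∀ {w : List ℕ}, IsChain (· < ·) w → des w = 0
  | [], _ | [_], _ => rfl
  | a :: b :: t, h => by
    rw [isChain_cons_cons] at h
    rw [des_cons_cons, if_neg (Nat.lt_asymm h.1), des_eq_zero_of_isChain h.2]

theorem isChain_of_des_eq_zero : ∀ {w : List ℕ}, w.Nodup → des w = 0 → IsChain (· < ·) w
  | [], _, _ => .nil
  | [a], _, _ => .singleton a
  | a :: b :: t, hnd, h => by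
    have hab : a ≠ b := by simp_all
    rw [des_cons_cons] at h
    refine isChain_cons_cons.2 ⟨?_, isChain_of_des_eq_zero hnd.of_cons (by omega)⟩
    split_ifs at h <;> omega

theorem des_of_isChain_gt : ∀ {w : List ℕ}, IsChain (· > ·) w → des w = w.length - 1
  | [], _ | [_], _ => rfl
  | a :: b :: t, h => by
    rw [isChain_cons_cons] at h
    rw [des_cons_cons, if_pos h.1, des_of_isChain_gt h.2]
    simp only [length_cons]
    omega

theorem inv_eq_zero_of_isChain : ∀ {w : List ℕ}, IsChain (· < ·) w → inv w = 0
  | [], _ => rfl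
  | a :: t, h => by
    rw [isChain_iff_pairwise, pairwise_cons] at h
    show t.countP _ + inv t = 0
    rw [inv_eq_zero_of_isChain (isChain_iff_pairwise.2 h.2), countP_eq_zero.2]
    simpa using fun x hx => (h.1 x hx).le

end Descents

section Runs

theorem decRun_prefix (hi lo : ℕ) : ∀ t : List ℕ, decRun hi lo t <+: t
  | [] => nil_prefix
  | b :: t => by
    rw [decRun]
    split
    · exact cons_prefix_cons.2 ⟨rfl, decRun_prefix b lo t⟩
    · exact nil_prefix

theorem isChain_cons_decRun (hi lo : ℕ) : ∀ t : List ℕ, IsChain (· > ·) (hi :: decRun hi lo t)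
  | [] => .singleton hi
  | b :: t => by
    rw [decRun]
    split_ifs with h
    · exact isChain_cons_cons.2 ⟨h.1, isChain_cons_decRun b lo t⟩
    · exact .singleton hi

theorem mem_decRun (hi lo : ℕ) : ∀ t : List ℕ, ∀ y ∈ decRun hi lo t, lo < y ∧ y < hi
  | [] => by simp [decRun]
  | b :: t => by
    rw [decRun]
    split_ifs with h
    · rintro y (_ | ⟨_, hy⟩)
      · exact ⟨h.2, h.1⟩
      · exact (mem_decRun b lo t y hy).imp_right (·.trans h.1)
    · simp

theorem decRun_stop (hi lo : ℕ) : ∀ t : List ℕ,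
    ∀ y ∈ (t.drop (decRun hi lo t).length).head?, (decRun hi lo t).getLastD hi ≤ y ∨ y ≤ lo
  | [] => by simp
  | b :: t => by
    rw [decRun]
    split
    · simp only [length_cons, drop_succ_cons, getLastD_cons]
      exact decRun_stop b lo t
    · simp only [length_nil, drop_zero, head?_cons, Option.mem_def, Option.some.injEq,
        getLastD_nil, forall_eq']
      omega

theorem head?_incrPrefix : ∀ w : List ℕ, (incrPrefix w).head? = w.head?
  | [] | [_] => rfl
  | a :: b :: t => by rw [incrPrefix]; split <;> rfl

theorem isChain_incrPrefix : ∀ w : List ℕ, IsChain (· < ·) (incrPrefix w)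
  | [] | [_] => by simp [incrPrefix]
  | a :: b :: t => by
    rw [incrPrefix]
    split_ifs with h
    · refine isChain_cons.2 ⟨fun y hy => ?_, isChain_incrPrefix (b :: t)⟩
      rw [head?_incrPrefix, head?_cons, Option.mem_some_iff] at hy
      exact hy ▸ h
    · exact .singleton a

theorem incrPrefix_prefix : ∀ w : List ℕ, incrPrefix w <+: w
  | [] | [_] => by simp [incrPrefix]
  | a :: b :: t => by
    rw [incrPrefix]
    split
    · exact cons_prefix_cons.2 ⟨rfl, incrPrefix_prefix (b :: t)⟩
    · exact ⟨b :: t, rfl⟩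

theorem incrPrefix_ne_nil {w : List ℕ} (hw : w ≠ []) : incrPrefix w ≠ [] := by
  intro h
  have := head?_incrPrefix w
  rw [h, head?_nil, eq_comm, head?_eq_none_iff] at this
  exact hw this

theorem incrPrefix_stop : ∀ w : List ℕ,
    ∀ y ∈ (w.drop (incrPrefix w).length).head?, y ≤ (incrPrefix w).getLastD 0
  | [] | [_] => by simp [incrPrefix]
  | a :: b :: t => by
    rw [incrPrefix]
    split
    · simp only [length_cons, drop_succ_cons, getLastD_cons,
        getLastD_congr (incrPrefix_ne_nil (cons_ne_nil b t)) a 0]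
      exact incrPrefix_stop (b :: t)
    · simp only [length_cons, length_nil, drop_succ_cons, drop_zero, head?_cons,
        Option.mem_def, Option.some.injEq, getLastD_cons, getLastD_nil, forall_eq']
      omega

theorem incrPrefix_eq_self : ∀ {w : List ℕ}, IsChain (· < ·) w → incrPrefix w = w
  | [], _ | [_], _ => rfl
  | a :: b :: t, h => by
    rw [isChain_cons_cons] at h
    rw [incrPrefix, if_pos h.1, incrPrefix_eq_self h.2]

theorem prefix_incrPrefix_append (T : List ℕ) :
    ∀ {P : List ℕ}, IsChain (· < ·) P → P <+: incrPrefix (P ++ T)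
  | [], _ => nil_prefix
  | [p], _ => by
    have h := head?_incrPrefix (p :: T)
    rw [singleton_append]
    cases hl : incrPrefix (p :: T) with
    | nil => simp [hl] at h
    | cons q l =>
      rw [hl, head?_cons, head?_cons, Option.some.injEq] at h
      subst h
      exact cons_prefix_cons.2 ⟨rfl, nil_prefix⟩
  | p :: q :: P, hP => by
    rw [isChain_cons_cons] at hP
    rw [cons_append, cons_append, incrPrefix, if_pos hP.1]
    exact cons_prefix_cons.2 ⟨rfl, prefix_incrPrefix_append T hP.2⟩

theorem exists_incrPrefix_append {P : List ℕ} (T : List ℕ) (hP : IsChain (· < ·) P) :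
    ∃ E, E <+: T ∧ incrPrefix (P ++ T) = P ++ E := by
  obtain ⟨E, hE⟩ := prefix_incrPrefix_append T hP
  refine ⟨E, ?_, hE.symm⟩
  rw [← prefix_append_right_inj P, hE]
  exact incrPrefix_prefix _

end Runs

section SpecialWave

theorem exists_drop_incrPrefix_eq_cons {w : List ℕ} (h : des w ≠ 0) :
    ∃ x rs, w.drop (incrPrefix w).length = x :: rs := by
  refine exists_cons_of_ne_nil fun hnil => h (des_eq_zero_of_isChain ?_)
  have := prefix_iff_eq_append.1 (incrPrefix_prefix w)
  rw [hnil, append_nil] at this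
  exact this ▸ isChain_incrPrefix w

theorem sw_of_drop_eq_cons {w : List ℕ} {x : ℕ} {rs : List ℕ}
    (h : w.drop (incrPrefix w).length = x :: rs) :
    sw w = (incrPrefix w).dropWhile (fun u => decide (u < x)) ++
      x :: decRun x (((incrPrefix w).takeWhile fun u => decide (u < x)).getLastD 0) rs := by
  simp only [sw, h, drop_length_takeWhile]

theorem swCompl_of_drop_eq_cons {w : List ℕ} {x : ℕ} {rs : List ℕ}
    (h : w.drop (incrPrefix w).length = x :: rs) :
    swCompl w = ((incrPrefix w).takeWhile fun u => decide (u < x)) ++ rs.drop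
      (decRun x (((incrPrefix w).takeWhile fun u => decide (u < x)).getLastD 0) rs).length := by
  simp only [swCompl, h]

theorem exists_eq_append_sw_append (w : List ℕ) :
    ∃ A B, w = A ++ sw w ++ B ∧ swCompl w = A ++ B := by
  cases h : w.drop (incrPrefix w).length with
  | nil => exact ⟨[], [], by simp [sw, h], by simp [swCompl, h]⟩
  | cons x rs =>
    refine ⟨_, _, ?_, swCompl_of_drop_eq_cons h⟩
    rw [sw_of_drop_eq_cons h]
    conv_lhs => rw [← prefix_iff_eq_append.1 (incrPrefix_prefix w), h,
      ← prefix_iff_eq_append.1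
        (decRun_prefix x (((incrPrefix w).takeWhile fun u => decide (u < x)).getLastD 0) rs)]
    simp only [append_assoc, cons_append]
    rw [← append_assoc (takeWhile _ _), takeWhile_append_dropWhile]

theorem sw_ne_nil {w : List ℕ} (hw : w ≠ []) : sw w ≠ [] := by
  cases h : w.drop (incrPrefix w).length with
  | nil => simpa [sw, h] using hw
  | cons x rs => simp [sw_of_drop_eq_cons h]

theorem swCompl_sublist (w : List ℕ) : swCompl w <+ w := by
  obtain ⟨A, B, hw, hc⟩ := exists_eq_append_sw_append w
  rw [hc, hw, append_assoc]
  exact (sublist_append_right _ B).append_left A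

theorem swCompl_nodup {w : List ℕ} (hnd : w.Nodup) : (swCompl w).Nodup :=
  hnd.sublist (swCompl_sublist w)

theorem swCompl_pos {w : List ℕ} (hpos : ∀ a ∈ w, 0 < a) : ∀ a ∈ swCompl w, 0 < a :=
  fun a ha => hpos a ((swCompl_sublist w).subset ha)

theorem swCompl_append_sw_perm (w : List ℕ) : swCompl w ++ sw w ~ w := by
  obtain ⟨A, B, hw, hc⟩ := exists_eq_append_sw_append w
  rw [hc]
  conv_rhs => rw [hw]
  simpa only [append_assoc] using perm_append_comm.append_left A

theorem length_swCompl_lt {w : List ℕ} (hw : w ≠ []) : (swCompl w).length < w.length := by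
  have := (swCompl_append_sw_perm w).length_eq
  have := length_pos_iff.2 (sw_ne_nil hw)
  simp only [length_append] at *
  omega

theorem sw_eq_self_of_isChain {w : List ℕ} (h : IsChain (· < ·) w) : sw w = w := by
  simp [sw, incrPrefix_eq_self h]

end SpecialWave

section Waves

variable {inc dec : List ℕ}

theorem isChain_inc_of_wave (h : IsChain (· < ·) (dec.reverse ++ inc)) : IsChain (· < ·) inc :=
  (isChain_append.1 h).2.1

theorem isChain_dec_of_wave (h : IsChain (· < ·) (dec.reverse ++ inc)) : IsChain (· > ·) dec :=
  isChain_reverse.1 (isChain_append.1 h).1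

theorem lt_of_wave (h : IsChain (· < ·) (dec.reverse ++ inc)) : ∀ y ∈ dec, ∀ u ∈ inc, y < u :=
  fun _ hy _ hu => (isChain_iff_pairwise.1 h).rel_of_mem_append (mem_reverse.2 hy) hu

theorem des_wave (h : IsChain (· < ·) (dec.reverse ++ inc)) (hinc : inc ≠ []) (hdec : dec ≠ []) :
    des (inc ++ dec) = dec.length := by
  obtain ⟨c, dec, rfl⟩ := exists_cons_of_ne_nil hdec
  have hc : c < inc.getLastD 0 := lt_of_wave h c mem_cons_self _ (getLastD_mem hinc 0)
  rw [des_append_cons, des_eq_zero_of_isChain (isChain_inc_of_wave h),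
    des_of_isChain_gt (isChain_dec_of_wave h), if_pos hc, length_cons]
  omega

theorem isWave_append (h : IsChain (· < ·) (dec.reverse ++ inc)) (hinc : inc ≠ [])
    (hdec : dec ≠ []) : IsWave (inc ++ dec) := by
  have hlen : inc.length - 1 + 1 = inc.length := Nat.sub_add_cancel (length_pos_iff.2 hinc)
  refine ⟨inc.length - 1, ?_, ?_⟩
  · rw [length_append, hlen]
    exact Nat.lt_add_of_pos_right (length_pos_iff.2 hdec)
  · rwa [hlen, drop_left, take_left]

theorem IsWave.exists_eq_append {α : List ℕ} (h : IsWave α) :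
    ∃ inc dec, α = inc ++ dec ∧ inc ≠ [] ∧ dec ≠ [] ∧ IsChain (· < ·) (dec.reverse ++ inc) := by
  obtain ⟨c, hc, hchain⟩ := h
  refine ⟨α.take (c + 1), α.drop (c + 1), (take_append_drop _ _).symm, ?_, ?_, hchain⟩
  · rw [← length_pos_iff, length_take]
    omega
  · rw [← length_pos_iff, length_drop]
    omega

end Waves

section SpecialWaveSplit

structure SwSplit (w P inc dec T : List ℕ) : Prop where
  eq : w = P ++ inc ++ dec ++ T
  sw_eq : sw w = inc ++ dec
  swCompl_eq : swCompl w = P ++ T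
  isChain_left : IsChain (· < ·) (P ++ inc)
  isChain_wave : IsChain (· < ·) (dec.reverse ++ inc)
  inc_ne_nil : inc ≠ []
  dec_ne_nil : dec ≠ []
  left_lt_dec : ∀ p ∈ P, ∀ y ∈ dec, p < y
  -- the maximality of `s` in the definition of the special wave
  head_right : ∀ y ∈ T.head?, dec.getLastD 0 ≤ y ∨ y ≤ P.getLastD 0

theorem exists_swSplit {w : List ℕ} (hnd : w.Nodup) (hdes : des w ≠ 0) :
    ∃ P inc dec T, SwSplit w P inc dec T := by
  obtain ⟨x, rs, hrest⟩ := exists_drop_incrPrefix_eq_cons hdes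
  have hw : w = incrPrefix w ++ x :: rs := by
    rw [← hrest]
    exact (prefix_iff_eq_append.1 (incrPrefix_prefix w)).symm
  have hpre_ne : incrPrefix w ≠ [] := incrPrefix_ne_nil (by rw [hw]; simp)
  have hx : x ∉ incrPrefix w := by
    rw [hw, nodup_append] at hnd
    exact fun hx => hnd.2.2 x hx x mem_cons_self rfl
  set P := (incrPrefix w).takeWhile fun u => decide (u < x)
  set inc := (incrPrefix w).dropWhile fun u => decide (u < x)
  set D := decRun x (P.getLastD 0) rs
  have hpre : P ++ inc = incrPrefix w := takeWhile_append_dropWhile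
  have hrs : D ++ rs.drop D.length = rs := prefix_iff_eq_append.1 (decRun_prefix _ _ rs)
  have hchain : IsChain (· < ·) (P ++ inc) := hpre ▸ isChain_incrPrefix w
  have hxinc : ∀ u ∈ inc, x < u := lt_of_mem_dropWhile (isChain_incrPrefix w) hx
  have hPx : ∀ p ∈ P, p < x := fun p hp => by simpa using mem_takeWhile_imp hp
  refine ⟨P, inc, x :: D, rs.drop D.length,
    { eq := by rw [hw, ← hpre, ← hrs]; simp
      sw_eq := sw_of_drop_eq_cons hrest
      swCompl_eq := swCompl_of_drop_eq_cons hrest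
      isChain_left := hchain
      isChain_wave := ?_
      inc_ne_nil := dropWhile_lt_ne_nil hpre_ne (incrPrefix_stop w x (by rw [hrest]; rfl))
      dec_ne_nil := cons_ne_nil _ _
      left_lt_dec := ?_
      head_right := by simpa only [getLastD_cons] using decRun_stop x (P.getLastD 0) rs }⟩
  · refine isChain_append.2 ⟨isChain_reverse.2 (isChain_cons_decRun _ _ rs),
      hchain.sublist (sublist_append_right P inc), fun a ha b hb => ?_⟩
    rw [getLast?_reverse, head?_cons, Option.mem_some_iff] at ha
    exact ha ▸ hxinc b (mem_of_mem_head? hb)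
  · rintro p hp y (_ | ⟨_, hy⟩)
    · exact hPx p hp
    · exact (le_getLastD_of_isChain (hchain.sublist (sublist_append_left P inc)) 0 p hp).trans_lt
        (mem_decRun _ _ rs y hy).1

variable {w P inc dec T : List ℕ}

theorem SwSplit.sw_isWave (h : SwSplit w P inc dec T) : IsWave (sw w) :=
  h.sw_eq ▸ isWave_append h.isChain_wave h.inc_ne_nil h.dec_ne_nil

theorem SwSplit.lt_getLastD_dec_iff (h : SwSplit w P inc dec T) (hnd : w.Nodup)
    (hpos : ∀ a ∈ w, 0 < a) {y : ℕ} (hy : y ∈ T.head?) :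
    y < dec.getLastD 0 ↔ y < P.getLastD 0 := by
  have hyT : y ∈ T := mem_of_mem_head? hy
  -- positivity makes the default `0` of `getLastD` act as the convention `w₀ = 0`
  have hy0 : 0 < y := hpos y (by rw [h.eq]; exact mem_append_right _ hyT)
  have hlast : P ≠ [] → P.getLastD 0 < dec.getLastD 0 := fun hP =>
    h.left_lt_dec _ (getLastD_mem hP 0) _ (getLastD_mem h.dec_ne_nil 0)
  rcases h.head_right y hy with hle | hle
  · refine iff_of_false (by omega) fun hlt => ?_
    rcases eq_or_ne P [] with rfl | hP
    · simp at hlt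
    · have := hlast hP
      omega
  · have hP : P ≠ [] := by
      rintro rfl
      simp at hle
      omega
    have hne : y ≠ P.getLastD 0 := by
      rintro rfl
      rw [h.eq, append_assoc, append_assoc, nodup_append] at hnd
      exact hnd.2.2 _ (getLastD_mem hP 0) _ (mem_append_right _ (mem_append_right _ hyT)) rfl
    have := hlast hP
    exact iff_of_true (by omega) (by omega)

theorem SwSplit.des_eq (h : SwSplit w P inc dec T) (hnd : w.Nodup) (hpos : ∀ a ∈ w, 0 < a) :
    des w = des (swCompl w) + des (sw w) := by
  have hleft : des (P ++ inc ++ dec) = des (inc ++ dec) := by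
    obtain ⟨c, dec, rfl⟩ := exists_cons_of_ne_nil h.dec_ne_nil
    rw [des_append_cons, des_append_cons, des_eq_zero_of_isChain h.isChain_left,
      des_eq_zero_of_isChain (isChain_inc_of_wave h.isChain_wave),
      getLastD_append_of_ne_nil P h.inc_ne_nil]
  have hP : des P = 0 := des_eq_zero_of_isChain (h.isChain_left.sublist (sublist_append_left P inc))
  rw [h.sw_eq, h.swCompl_eq, ← hleft, h.eq]
  cases T with
  | nil => simp only [append_nil, hP, zero_add]
  | cons y T =>
    have hiff := h.lt_getLastD_dec_iff hnd hpos (y := y) rfl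
    rw [des_append_cons, des_append_cons, hP, getLastD_append_of_ne_nil _ h.dec_ne_nil]
    by_cases hy : y < dec.getLastD 0
    · rw [if_pos hy, if_pos (hiff.1 hy)]
      omega
    · rw [if_neg hy, if_neg (mt hiff.2 hy)]
      omega

theorem SwSplit.ins_eq (h : SwSplit w P inc dec T) (hpos : ∀ a ∈ w, 0 < a) :
    ins (swCompl w) (sw w) = w := by
  have hlast : (inc ++ dec).getLastD 0 = dec.getLastD 0 :=
    getLastD_append_of_ne_nil inc h.dec_ne_nil 0
  obtain ⟨E, hET, hE⟩ := exists_incrPrefix_append T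
    (h.isChain_left.sublist (sublist_append_left P inc))
  have hE_nil : E.takeWhile (fun u => decide (u < dec.getLastD 0)) = [] := by
    cases E with
    | nil => rfl
    | cons y E =>
      obtain ⟨T', rfl⟩ := hET
      suffices hy : dec.getLastD 0 ≤ y by
        rw [takeWhile_cons_of_neg (by simpa using hy)]
      rcases h.head_right y rfl with hle | hle
      · exact hle
      have hy0 : 0 < y := hpos y (by rw [h.eq]; simp)
      have hP : P ≠ [] := by
        rintro rfl
        simp at hle
        omega
      have hchain := hE ▸ isChain_incrPrefix (P ++ (y :: E ++ T'))
      have := (isChain_append.1 hchain).2.2 _ (getLast?_eq_some_getLast hP) y rfl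
      rw [getLastD_eq_getLast?, getLast?_eq_some_getLast hP, Option.getD_some] at hle
      omega
  have hpfx : (incrPrefix (P ++ T)).takeWhile (fun u => decide (u < dec.getLastD 0)) = P := by
    rw [hE, takeWhile_append_of_pos (fun p hp => by
      simpa using h.left_lt_dec p hp _ (getLastD_mem h.dec_ne_nil 0)), hE_nil, append_nil]
  rw [h.sw_eq, h.swCompl_eq, ins, hlast, hpfx, drop_left, h.eq]
  simp

end SpecialWaveSplit

section Hooks

/-- A wave `inc ++ dec` and the hook `inc.head :: (dec.reverse ++ inc.tail)` have the same sorted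
word `dec.reverse ++ inc`, and `dec.length` is both the `des` of the wave and the `inv` of the
hook, so each of the two is read off the sorted word at that position. -/
def hookify (α : List ℕ) : List ℕ :=
  let l := α.insertionSort (· ≤ ·)
  match l.drop (des α) with
  | [] => []
  | a :: r => a :: (l.take (des α) ++ r)

def wavify (h : List ℕ) : List ℕ :=
  let l := h.insertionSort (· ≤ ·)
  l.drop (inv h) ++ (l.take (inv h)).reverse

theorem hookify_perm (α : List ℕ) : hookify α ~ α := by
  rcases eq_or_ne α [] with rfl | hα
  · rfl
  have hsort := perm_insertionSort (· ≤ ·) α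
  have hk := hsort.length_eq ▸ des_lt_length hα
  obtain ⟨a, r, hdrop⟩ : ∃ a r, (α.insertionSort (· ≤ ·)).drop (des α) = a :: r :=
    exists_cons_of_ne_nil (by rw [← length_pos_iff, length_drop]; omega)
  have hl := take_append_drop (des α) (α.insertionSort (· ≤ ·))
  rw [hdrop] at hl
  rw [← hl] at hsort
  simp only [hookify, hdrop]
  exact perm_middle.symm.trans hsort

variable {i₀ : ℕ} {inc dec : List ℕ}

theorem hookify_wave (h : IsChain (· < ·) (dec.reverse ++ i₀ :: inc)) (hdec : dec ≠ []) :
    hookify (i₀ :: inc ++ dec) = i₀ :: (dec.reverse ++ inc) := by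
  have hsort : (i₀ :: inc ++ dec).insertionSort (· ≤ ·) = dec.reverse ++ i₀ :: inc :=
    insertionSort_eq_of_perm (perm_append_comm.trans ((reverse_perm dec).symm.append_right _)) h
  have hlen : des (i₀ :: inc ++ dec) = dec.reverse.length := by
    rw [des_wave h (cons_ne_nil _ _) hdec, length_reverse]
  simp only [hookify, hsort, hlen, drop_left, take_left]

theorem inv_hookify_wave (h : IsChain (· < ·) (dec.reverse ++ i₀ :: inc)) (hdec : dec ≠ []) :
    inv (hookify (i₀ :: inc ++ dec)) = dec.length := by
  rw [hookify_wave h hdec]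
  show (dec.reverse ++ inc).countP _ + inv (dec.reverse ++ inc) = _
  have hlt := lt_of_wave h
  have hinc := isChain_iff_pairwise.1 (isChain_inc_of_wave h)
  rw [inv_eq_zero_of_isChain (h.sublist ((sublist_cons_self i₀ inc).append_left _)),
    countP_append,
    countP_eq_length.2 fun a ha => by simpa using hlt a (mem_reverse.1 ha) i₀ mem_cons_self,
    countP_eq_zero.2 fun a ha => by simpa using (rel_of_pairwise_cons hinc ha).le,
    length_reverse, add_zero, add_zero]

theorem IsWave.isHook_hookify {α : List ℕ} (hα : IsWave α) : IsHook (hookify α) := by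
  obtain ⟨_, dec, rfl, hinc, hdec, h⟩ := hα.exists_eq_append
  obtain ⟨i₀, inc, rfl⟩ := exists_cons_of_ne_nil hinc
  obtain ⟨b, u, hbu⟩ := exists_cons_of_ne_nil (reverse_ne_nil_iff.2 hdec)
  rw [hookify_wave h hdec, hbu]
  refine ⟨lt_of_wave h b (mem_reverse.1 (hbu ▸ mem_cons_self)) i₀ mem_cons_self, ?_⟩
  have := h.sublist ((sublist_cons_self i₀ inc).append_left _)
  rwa [hbu] at this

theorem IsWave.inv_hookify {α : List ℕ} (hα : IsWave α) : inv (hookify α) = des α := by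
  obtain ⟨_, dec, rfl, hinc, hdec, h⟩ := hα.exists_eq_append
  obtain ⟨i₀, inc, rfl⟩ := exists_cons_of_ne_nil hinc
  rw [inv_hookify_wave h hdec, des_wave h hinc hdec]

theorem IsWave.wavify_hookify {α : List ℕ} (hα : IsWave α) : wavify (hookify α) = α := by
  obtain ⟨_, dec, rfl, hinc, hdec, h⟩ := hα.exists_eq_append
  obtain ⟨i₀, inc, rfl⟩ := exists_cons_of_ne_nil hinc
  have hsort : (hookify (i₀ :: inc ++ dec)).insertionSort (· ≤ ·) = dec.reverse ++ i₀ :: inc :=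
    insertionSort_eq_of_perm ((hookify_perm _).trans
      (perm_append_comm.trans ((reverse_perm dec).symm.append_right _))) h
  rw [wavify, hsort, inv_hookify_wave h hdec, ← length_reverse, drop_left, take_left,
    reverse_reverse]

end Hooks

section LastHook

def decPrefix : List ℕ → List ℕ
  | [] => []
  | [a] => [a]
  | a :: b :: t => if b < a then a :: decPrefix (b :: t) else [a]

/-- The last hook of a word is its longest increasing suffix together with the letter before
it. -/
def splitLastHook (τ : List ℕ) : List ℕ × List ℕ :=
  let k := τ.length - ((decPrefix τ.reverse).length + 1)
  (τ.take k, τ.drop k)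

theorem decPrefix_append {a : ℕ} {M : List ℕ} :
    ∀ {L : List ℕ}, L ≠ [] → IsChain (· > ·) L → ¬ a < L.getLastD 0 → decPrefix (L ++ a :: M) = L
  | [x], _, _, ha => by
    rw [singleton_append, decPrefix, if_neg (by simpa using ha)]
  | x :: y :: L, _, hL, ha => by
    rw [isChain_cons_cons] at hL
    rw [getLastD_cons] at ha
    rw [cons_append, cons_append, decPrefix, if_pos hL.1, ← cons_append,
      decPrefix_append (cons_ne_nil y L) hL.2 ha]

theorem splitLastHook_append (u : List ℕ) {h : List ℕ} (hh : IsHook h) :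
    splitLastHook (u ++ h) = (u, h) := by
  obtain ⟨a, b, t, rfl⟩ : ∃ a b t, h = a :: b :: t := by
    match h, hh with
    | a :: b :: t, _ => exact ⟨a, b, t, rfl⟩
  obtain ⟨hba, hchain⟩ := hh
  have hrev : (u ++ a :: b :: t).reverse = (b :: t).reverse ++ a :: u.reverse := by simp
  have hdec : decPrefix (u ++ a :: b :: t).reverse = (b :: t).reverse := by
    rw [hrev]
    refine decPrefix_append (by simp) (isChain_reverse.2 hchain) ?_
    rw [getLastD_eq_getLast?, getLast?_reverse, head?_cons, Option.getD_some]
    omega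
  have hk : (u ++ a :: b :: t).length - ((decPrefix (u ++ a :: b :: t).reverse).length + 1)
      = u.length := by
    rw [hdec]
    simp
  simp only [splitLastHook, hk, take_left, drop_left]

theorem length_splitLastHook_fst_lt {τ : List ℕ} (hτ : τ ≠ []) :
    (splitLastHook τ).1.length < τ.length := by
  have := length_pos_iff.2 hτ
  simp only [splitLastHook, length_take]
  omega

theorem des_append_ne_zero_of_isHook (u : List ℕ) {h : List ℕ} (hh : IsHook h) :
    des (u ++ h) ≠ 0 := by
  match h, hh with
  | a :: b :: t, ⟨hba, _⟩ =>
    rw [des_append_cons, des_cons_cons, if_pos hba]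
    omega

end LastHook

section HookFactorization

def hookData (w : List ℕ) : List ℕ × List (List ℕ) :=
  if des w = 0 then (w, [])
  else ((hookData (swCompl w)).1, (hookData (swCompl w)).2 ++ [hookify (sw w)])
termination_by w.length
decreasing_by exact length_swCompl_lt (ne_of_apply_ne des ‹_›)

def hookWord (w : List ℕ) : List ℕ := (hookData w).1 ++ (hookData w).2.flatten

def unhook (τ : List ℕ) : List ℕ :=
  if des τ = 0 then τ
  else ins (unhook (splitLastHook τ).1) (wavify (splitLastHook τ).2)
termination_by τ.length
decreasing_by exact length_splitLastHook_fst_lt (ne_of_apply_ne des ‹_›)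

variable {w : List ℕ}

theorem hookData_of_des_eq_zero (h : des w = 0) : hookData w = (w, []) := by
  rw [hookData, if_pos h]

theorem hookData_of_des_ne_zero (h : des w ≠ 0) :
    hookData w = ((hookData (swCompl w)).1, (hookData (swCompl w)).2 ++ [hookify (sw w)]) := by
  rw [hookData, if_neg h]

theorem hookWord_of_des_eq_zero (h : des w = 0) : hookWord w = w := by
  simp [hookWord, hookData_of_des_eq_zero h]

theorem hookWord_of_des_ne_zero (h : des w ≠ 0) :
    hookWord w = hookWord (swCompl w) ++ hookify (sw w) := by
  simp [hookWord, hookData_of_des_ne_zero h]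

theorem hookWord_perm (w : List ℕ) : hookWord w ~ w := by
  induction w using hookData.induct with
  | case1 w h => rw [hookWord_of_des_eq_zero h]
  | case2 w h ih =>
    rw [hookWord_of_des_ne_zero h]
    exact (ih.append (hookify_perm _)).trans (swCompl_append_sw_perm w)

theorem incr_hookData_fst (hnd : w.Nodup) : Incr (hookData w).1 := by
  induction w using hookData.induct with
  | case1 w h =>
    rw [hookData_of_des_eq_zero h]
    exact isChain_of_des_eq_zero hnd h
  | case2 w h ih =>
    rw [hookData_of_des_ne_zero h]
    exact ih (swCompl_nodup hnd)

theorem isHook_of_mem_hookData_snd (hnd : w.Nodup) : ∀ h ∈ (hookData w).2, IsHook h := by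
  induction w using hookData.induct with
  | case1 w h => simp [hookData_of_des_eq_zero h]
  | case2 w h ih =>
    obtain ⟨P, inc, dec, T, hs⟩ := exists_swSplit hnd h
    rw [hookData_of_des_ne_zero h]
    rintro α hα
    rcases mem_append.1 hα with hα | hα
    · exact ih (swCompl_nodup hnd) α hα
    · exact mem_singleton.1 hα ▸ hs.sw_isWave.isHook_hookify

theorem isHookFact_hookData (hnd : w.Nodup) :
    IsHookFact (hookWord w) (hookData w).1 (hookData w).2 :=
  ⟨incr_hookData_fst hnd, isHook_of_mem_hookData_snd hnd, rfl⟩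

theorem des_eq_lecVal_hookData (hnd : w.Nodup) (hpos : ∀ a ∈ w, 0 < a) :
    des w = lecVal (hookData w).2 := by
  induction w using hookData.induct with
  | case1 w h => rw [hookData_of_des_eq_zero h, h]; rfl
  | case2 w h ih =>
    obtain ⟨P, inc, dec, T, hs⟩ := exists_swSplit hnd h
    rw [hookData_of_des_ne_zero h, hs.des_eq hnd hpos, ih (swCompl_nodup hnd) (swCompl_pos hpos),
      ← hs.sw_isWave.inv_hookify]
    simp [lecVal]

theorem getLastD_hookData_perm (hnd : w.Nodup) :
    (hookData w).2.getLastD (hookData w).1 ~ sw w := by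
  by_cases h : des w = 0
  · rw [hookData_of_des_eq_zero h, sw_eq_self_of_isChain (isChain_of_des_eq_zero hnd h)]
    rfl
  · rw [hookData_of_des_ne_zero h, getLastD_concat]
    exact hookify_perm _

theorem unhook_hookWord (hnd : w.Nodup) (hpos : ∀ a ∈ w, 0 < a) : unhook (hookWord w) = w := by
  induction w using hookData.induct with
  | case1 w h => rw [hookWord_of_des_eq_zero h, unhook, if_pos h]
  | case2 w h ih =>
    obtain ⟨P, inc, dec, T, hs⟩ := exists_swSplit hnd h
    have hhook := hs.sw_isWave.isHook_hookify
    rw [hookWord_of_des_ne_zero h, unhook, if_neg (des_append_ne_zero_of_isHook _ hhook),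
      splitLastHook_append _ hhook, ih (swCompl_nodup hnd) (swCompl_pos hpos),
      hs.sw_isWave.wavify_hookify, hs.ins_eq hpos]

theorem hookWord_injOn :
    Set.InjOn hookWord {w : List ℕ | w.Nodup ∧ ∀ a ∈ w, 0 < a} := fun w hw w' hw' h => by
  rw [← unhook_hookWord hw.1 hw.2, h, unhook_hookWord hw'.1 hw'.2]

end HookFactorization

section Permutations

variable {n : ℕ}

theorem word_injective : Function.Injective (word (n := n)) := fun σ τ h => by
  ext i
  simpa using congrFun (ofFn_injective h) i

theorem word_nodup (σ : Equiv.Perm (Fin n)) : (word σ).Nodup :=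
  nodup_ofFn.2 fun i j h => σ.injective (Fin.ext (by simpa using h))

theorem mem_word {σ : Equiv.Perm (Fin n)} {a : ℕ} (ha : a ∈ word σ) : 0 < a ∧ a ≤ n := by
  obtain ⟨i, rfl⟩ := mem_ofFn.1 ha
  have := (σ i).isLt
  omega

theorem exists_word_eq {σ : Equiv.Perm (Fin n)} {l : List ℕ} (hl : l ~ word σ) :
    ∃ τ : Equiv.Perm (Fin n), word τ = l := by
  have hlen : l.length = n := by simpa [word] using hl.length_eq
  have hmem (i : ℕ) (hi : i < l.length) : 0 < l[i] ∧ l[i] ≤ n :=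
    mem_word (hl.subset (getElem_mem hi))
  let f (i : Fin n) : Fin n := ⟨l[i.1]'(hlen ▸ i.2) - 1, by have := hmem i (hlen ▸ i.2); omega⟩
  have hf : Function.Injective f := fun i j hij => by
    have h₁ := hmem i (hlen ▸ i.2)
    have h₂ := hmem j (hlen ▸ j.2)
    have : l[i.1] = l[j.1] := by simp only [f, Fin.mk.injEq] at hij; omega
    exact Fin.ext ((hl.nodup_iff.2 (word_nodup σ)).getElem_inj_iff.1 this)
  refine ⟨Equiv.ofBijective f (Finite.injective_iff_bijective.1 hf),
    ext_getElem (by simp [word, hlen]) fun i _ hi => ?_⟩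
  have := hmem i hi
  simp only [word, List.getElem_ofFn, Equiv.ofBijective_apply, f]
  omega

end Permutations

end Paper

/-- for every `n` there is a bijection `ψ` of `S_n` such that for every `σ`,
`des σ = lec (ψ σ)` and the rightmost hook of the hook factorization of `ψ σ` has the same
length and the same set of entries as the special wave `sw σ`. -/
theorem Paper.statement15 (n : ℕ) :
    ∃ ψ : Equiv.Perm (Fin n) ≃ Equiv.Perm (Fin n),
      ∀ σ : Equiv.Perm (Fin n), ∃ γ hs,
        IsHookFact (word (ψ σ)) γ hs ∧
        des (word σ) = lecVal hs ∧
        (hs.getLastD γ).length = (sw (word σ)).length ∧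
        (hs.getLastD γ).toFinset = (sw (word σ)).toFinset := by
  choose ψ hψ using fun σ : Equiv.Perm (Fin n) => exists_word_eq (hookWord_perm (word σ))
  have hgood (σ : Equiv.Perm (Fin n)) : (word σ).Nodup ∧ ∀ a ∈ word σ, 0 < a :=
    ⟨word_nodup σ, fun a ha => (mem_word ha).1⟩
  have hinj : Function.Injective ψ := fun σ τ h =>
    word_injective (hookWord_injOn (hgood σ) (hgood τ) (by rw [← hψ, ← hψ, h]))
  refine ⟨Equiv.ofBijective ψ (Finite.injective_iff_bijective.1 hinj), fun σ => ?_⟩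
  have hlast := getLastD_hookData_perm (word_nodup σ)
  refine ⟨(hookData (word σ)).1, (hookData (word σ)).2, ?_,
    des_eq_lecVal_hookData (hgood σ).1 (hgood σ).2, hlast.length_eq,
    List.toFinset_eq_of_perm _ _ hlast⟩
  rw [Equiv.ofBijective_apply, hψ]
  exact isHookFact_hookData (word_nodup σ)
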